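/- arXiv:1706.08079 — 8 statements merged into one kernel-verified Lean document; each statement's English description precedes it below -/
import Mathlib

section
/- Let E, F, G be ordered Banach spaces and let Φ : E × F → G be a continuous positive bilinear map. Let (xₙ)ₙ≥1 be a decreasing sequence of positive elements of E with ‖xₙ‖ → 0, and let (yₙ)ₙ≥1 be a sequence of positive elements of F such that the series ∑ₙ Φ(xₙ, yₙ) converges in G. Then Φ(xₙ, ∑_{k=1}^{n} y_k) → 0 in G as n → ∞. -/
/-!
Split `∑_{k ≤ n} y_k` at an index `M` beyond which the partial sums of `∑ Φ(x_k, y_k)` vary by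
less than `ε`. The head contributes `Φ(x_n, ∑_{k ≤ M} y_k) → 0` since `x_n → 0`. For the tail,
positivity of `Φ` and `x_n ≤ x_k` give `0 ≤ Φ(x_n, ∑_{M < k ≤ n} y_k) ≤ ∑_{M < k ≤ n} Φ(x_k, y_k)`,
and monotonicity of the norm bounds it by the Cauchy increment.
-/

open Filter Topology Finset

theorem Finset.sum_Icc_one_add_sum_Ioc {M : Type*} [AddCommMonoid M] (f : ℕ → M) {m n : ℕ}
    (hmn : m ≤ n) : ∑ k ∈ Icc 1 m, f k + ∑ k ∈ Ioc m n, f k = ∑ k ∈ Icc 1 n, f k := by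
  simpa only [← Icc_add_one_left_eq_Ioc, zero_add] using
    sum_Ioc_consecutive f (Nat.zero_le m) hmn

theorem LinearMap.apply_sum_le_sum_apply_of_le {R E F G ι : Type*} [CommSemiring R]
    [AddCommGroup E] [Preorder E] [AddLeftMono E] [Module R E]
    [AddCommMonoid F] [LE F] [Module R F]
    [AddCommGroup G] [Preorder G] [AddLeftMono G] [Module R G]
    (Φ : E →ₗ[R] F →ₗ[R] G) (hΦ : ∀ z w, 0 ≤ z → 0 ≤ w → 0 ≤ Φ z w)
    {s : Finset ι} {a : E} {x : ι → E} {y : ι → F}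
    (hx : ∀ i ∈ s, a ≤ x i) (hy : ∀ i ∈ s, 0 ≤ y i) :
    Φ a (∑ i ∈ s, y i) ≤ ∑ i ∈ s, Φ (x i) (y i) := by
  rw [map_sum]
  refine sum_le_sum fun i hi => sub_nonneg.1 ?_
  simpa using hΦ _ _ (sub_nonneg.2 (hx i hi)) (hy i hi)

theorem abel_partial_summation_stmt0_general
    {E F G : Type*}
    [NormedAddCommGroup E] [NormedSpace ℝ E] [PartialOrder E]
    [CovariantClass E E (· + ·) (· ≤ ·)]
    [NormedAddCommGroup F] [NormedSpace ℝ F] [PartialOrder F]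
    [CovariantClass F F (· + ·) (· ≤ ·)]
    [NormedAddCommGroup G] [NormedSpace ℝ G] [PartialOrder G]
    [CovariantClass G G (· + ·) (· ≤ ·)]
    (hG_norm : ∀ z w : G, 0 ≤ z → z ≤ w → ‖z‖ ≤ ‖w‖)
    (Φ : E →L[ℝ] F →L[ℝ] G)
    (hΦ_pos : ∀ (z : E) (w : F), 0 ≤ z → 0 ≤ w → 0 ≤ Φ z w)
    (x : ℕ → E) (y : ℕ → F)
    (hx_pos : ∀ n, 1 ≤ n → 0 ≤ x n)
    (hx_anti : ∀ n, 1 ≤ n → x (n + 1) ≤ x n)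
    (hx_norm : Tendsto (fun n => ‖x n‖) atTop (𝓝 0))
    (hy_pos : ∀ n, 1 ≤ n → 0 ≤ y n)
    (hconv : ∃ S : G,
      Tendsto (fun n => ∑ k ∈ Finset.Icc 1 n, Φ (x k) (y k)) atTop (𝓝 S)) :
    Tendsto (fun n => Φ (x n) (∑ k ∈ Finset.Icc 1 n, y k)) atTop (𝓝 0) := by
  obtain ⟨S, hS⟩ := hconv
  have hx_antiOn : AntitoneOn x {n | 1 ≤ n} := antitoneOn_nat_Ici_of_succ_le hx_anti
  rw [Metric.tendsto_nhds]
  intro ε hε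
  obtain ⟨M, hM⟩ := Metric.cauchySeq_iff'.1 hS.cauchySeq (ε / 2) (half_pos hε)
  have head : Tendsto (fun n => Φ (x n) (∑ k ∈ Icc 1 M, y k)) atTop (𝓝 0) :=
    ((Φ.flip _).continuous.tendsto' 0 0 (map_zero _)).comp
      (tendsto_zero_iff_norm_tendsto_zero.2 hx_norm)
  filter_upwards [Metric.tendsto_nhds.1 head (ε / 2) (half_pos hε), eventually_gt_atTop M]
    with n hhead hMn
  have tail : ‖Φ (x n) (∑ k ∈ Ioc M n, y k)‖
      ≤ ‖∑ k ∈ Icc 1 n, Φ (x k) (y k) - ∑ k ∈ Icc 1 M, Φ (x k) (y k)‖ := by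
    rw [← sum_Icc_one_add_sum_Ioc _ hMn.le, add_sub_cancel_left]
    have hy : ∀ k ∈ Ioc M n, 0 ≤ y k := fun k hk => hy_pos k (Nat.one_le_of_lt (mem_Ioc.1 hk).1)
    refine hG_norm _ _ (hΦ_pos _ _ (hx_pos n (Nat.one_le_of_lt hMn)) (sum_nonneg hy))
      (Φ.toLinearMap₁₂.apply_sum_le_sum_apply_of_le hΦ_pos (fun k hk => ?_) hy)
    exact hx_antiOn (Nat.one_le_of_lt (mem_Ioc.1 hk).1) (Nat.one_le_of_lt hMn) (mem_Ioc.1 hk).2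
  simp only [dist_eq_norm] at hM
  rw [dist_zero_right] at hhead ⊢
  rw [← sum_Icc_one_add_sum_Ioc _ hMn.le, map_add]
  calc _ ≤ ‖Φ (x n) (∑ k ∈ Icc 1 M, y k)‖ + ‖Φ (x n) (∑ k ∈ Ioc M n, y k)‖ := norm_add_le _ _
    _ < ε / 2 + ε / 2 := add_lt_add_of_lt_of_le hhead (tail.trans (hM n hMn.le).le)
    _ = ε := add_halves ε

/-- Olivier-type theorem: if `Φ` is a continuous positive bilinear map between ordered
Banach spaces, `(xₙ)` is decreasing positive with `‖xₙ‖ → 0`, `(yₙ)` is positive, and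
`∑ Φ(xₙ, yₙ)` converges, then `Φ(xₙ, ∑_{k=1}^n y_k) → 0`. -/
theorem abel_partial_summation_stmt0
    {E F G : Type*}
    [NormedAddCommGroup E] [NormedSpace ℝ E] [CompleteSpace E] [PartialOrder E]
    [CovariantClass E E (· + ·) (· ≤ ·)]
    [NormedAddCommGroup F] [NormedSpace ℝ F] [CompleteSpace F] [PartialOrder F]
    [CovariantClass F F (· + ·) (· ≤ ·)]
    [NormedAddCommGroup G] [NormedSpace ℝ G] [CompleteSpace G] [PartialOrder G]
    [CovariantClass G G (· + ·) (· ≤ ·)]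
    (hE_smul : ∀ (c : ℝ) (z : E), 0 ≤ c → 0 ≤ z → 0 ≤ c • z)
    (hE_gen : ∀ z : E, ∃ p q : E, 0 ≤ p ∧ 0 ≤ q ∧ z = p - q)
    (hE_norm : ∀ z w : E, 0 ≤ z → z ≤ w → ‖z‖ ≤ ‖w‖)
    (hF_smul : ∀ (c : ℝ) (z : F), 0 ≤ c → 0 ≤ z → 0 ≤ c • z)
    (hF_gen : ∀ z : F, ∃ p q : F, 0 ≤ p ∧ 0 ≤ q ∧ z = p - q)
    (hF_norm : ∀ z w : F, 0 ≤ z → z ≤ w → ‖z‖ ≤ ‖w‖)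
    (hG_smul : ∀ (c : ℝ) (z : G), 0 ≤ c → 0 ≤ z → 0 ≤ c • z)
    (hG_gen : ∀ z : G, ∃ p q : G, 0 ≤ p ∧ 0 ≤ q ∧ z = p - q)
    (hG_norm : ∀ z w : G, 0 ≤ z → z ≤ w → ‖z‖ ≤ ‖w‖)
    (Φ : E →L[ℝ] F →L[ℝ] G)
    (hΦ_pos : ∀ (z : E) (w : F), 0 ≤ z → 0 ≤ w → 0 ≤ Φ z w)
    (x : ℕ → E) (y : ℕ → F)
    (hx_pos : ∀ n, 1 ≤ n → 0 ≤ x n)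
    (hx_anti : ∀ n, 1 ≤ n → x (n + 1) ≤ x n)
    (hx_norm : Tendsto (fun n => ‖x n‖) atTop (𝓝 0))
    (hy_pos : ∀ n, 1 ≤ n → 0 ≤ y n)
    (hconv : ∃ S : G,
      Tendsto (fun n => ∑ k ∈ Finset.Icc 1 n, Φ (x k) (y k)) atTop (𝓝 S)) :
    Tendsto (fun n => Φ (x n) (∑ k ∈ Finset.Icc 1 n, y k)) atTop (𝓝 0) :=
  abel_partial_summation_stmt0_general hG_norm Φ hΦ_pos x y hx_pos hx_anti hx_norm hy_pos hconv
end

section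
/- Let E, F, G be ordered Banach spaces and let Φ : E × F → G be a continuous positive bilinear map. Let (xₙ)ₙ≥1 be a decreasing sequence of positive elements of E with ‖xₙ‖ → 0, and let (yₙ)ₙ≥1 be a sequence of positive elements of F. If the series ∑ₙ Φ(xₙ, yₙ) converges in G, then the series ∑ₙ Φ(xₙ − xₙ₊₁, ∑_{k=1}^{n} y_k) also converges in G and the two series have the same sum: ∑_{n=1}^{∞} Φ(xₙ, yₙ) = ∑_{n=1}^{∞} Φ(xₙ − xₙ₊₁, ∑_{k=1}^{n} y_k). -/
/-! Summation by parts gives `∑_{m ≤ n} Φ(x_m - x_{m+1}, Y_m) = S_n - Φ(x_{n+1}, Y_n)` with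
`Y_n = ∑_{k ≤ n} y_k` and `S_n = ∑_{k ≤ n} Φ(x_k, y_k)`, so it suffices that the boundary term
tends to `0`. Positivity of `Φ` and monotonicity of `x` give, for `M ≤ n`,
`0 ≤ Φ(x_{n+1}, Y_n) ≤ Φ(x_{n+1}, Y_M) + (S_n - S_M)`. Since the norm is monotone on the
positive cone, the boundary term is then small: the first summand tends to `0` because
`‖x_n‖ → 0`, and the second is small because `(S_n)` is Cauchy. -/

open Filter Topology Finset

namespace LinearMap

variable {R E F G : Type*} [CommRing R] [AddCommGroup E] [AddCommGroup F] [AddCommGroup G]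
  [Module R E] [Module R F] [Module R G]

theorem sum_Icc_by_parts₂ (Φ : E →ₗ[R] F →ₗ[R] G) (x : ℕ → E) (y : ℕ → F) (n : ℕ) :
    ∑ m ∈ Icc 1 n, Φ (x m - x (m + 1)) (∑ k ∈ Icc 1 m, y k) =
      ∑ k ∈ Icc 1 n, Φ (x k) (y k) - Φ (x (n + 1)) (∑ k ∈ Icc 1 n, y k) := by
  induction n with
  | zero => simp
  | succ n ih =>
    rw [sum_Icc_succ_top (Nat.le_add_left 1 n), ih]
    simp only [sum_Icc_succ_top (Nat.le_add_left 1 n), map_add, map_sub, sub_apply]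
    abel

theorem apply_le_apply_add_sub [PartialOrder E] [AddLeftMono E] [Preorder F]
    [PartialOrder G] [AddLeftMono G]
    (Φ : E →ₗ[R] F →ₗ[R] G) (hΦ : ∀ z w, 0 ≤ z → 0 ≤ w → 0 ≤ Φ z w)
    {x : ℕ → E} {y : ℕ → F} (hx : AntitoneOn x (Set.Ici 1)) (hy : ∀ k, 1 ≤ k → 0 ≤ y k)
    {M n : ℕ} (hMn : M ≤ n) :
    Φ (x (n + 1)) (∑ k ∈ Icc 1 n, y k) ≤
      Φ (x (n + 1)) (∑ k ∈ Icc 1 M, y k) +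
        (∑ k ∈ Icc 1 n, Φ (x k) (y k) - ∑ k ∈ Icc 1 M, Φ (x k) (y k)) := by
  have hIcc : ∀ j, Icc 1 j = Ioc 0 j := fun j => Icc_add_one_left_eq_Ioc 0 j
  rw [hIcc, hIcc, ← sum_Ioc_consecutive y M.zero_le hMn,
    ← sum_Ioc_consecutive (fun k => Φ (x k) (y k)) M.zero_le hMn, add_sub_cancel_left, map_add]
  refine add_le_add_right (α := G) ?_ _
  rw [map_sum]
  refine sum_le_sum fun k hk => ?_
  obtain ⟨hMk, hkn⟩ := mem_Ioc.1 hk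
  have hxk : x (n + 1) ≤ x k := hx (Set.mem_Ici.2 (by omega)) (Set.mem_Ici.2 (by omega)) (by omega)
  simpa [sub_nonneg] using hΦ _ _ (sub_nonneg.2 hxk) (hy k (by omega))

end LinearMap

theorem tendsto_zero_of_norm_le_add_dist {G α : Type*} [SeminormedAddGroup G]
    [PseudoMetricSpace α] {t : ℕ → G} {s : ℕ → α} {u : ℕ → ℕ → ℝ} (hs : CauchySeq s)
    (hu : ∀ M, Tendsto (u · M) atTop (𝓝 0))
    (ht : ∀ M n, M ≤ n → ‖t n‖ ≤ u n M + dist (s n) (s M)) :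
    Tendsto t atTop (𝓝 0) := by
  refine Metric.tendsto_atTop.2 fun ε hε => ?_
  obtain ⟨M, hM⟩ := Metric.cauchySeq_iff'.1 hs (ε / 2) (half_pos hε)
  obtain ⟨N, hN⟩ := eventually_atTop.1 ((hu M).eventually (gt_mem_nhds (half_pos hε)))
  refine ⟨max M N, fun n hn => ?_⟩
  rw [dist_zero_right]
  calc ‖t n‖ ≤ u n M + dist (s n) (s M) := ht M n (le_of_max_le_left hn)
    _ < ε / 2 + ε / 2 := add_lt_add (hN n (le_of_max_le_right hn)) (hM n (le_of_max_le_left hn))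
    _ = ε := add_halves ε

theorem abel_partial_summation_stmt2_general
    {E F G : Type*}
    [NormedAddCommGroup E] [NormedSpace ℝ E] [PartialOrder E]
    [CovariantClass E E (· + ·) (· ≤ ·)]
    [NormedAddCommGroup F] [NormedSpace ℝ F] [PartialOrder F]
    [CovariantClass F F (· + ·) (· ≤ ·)]
    [NormedAddCommGroup G] [NormedSpace ℝ G] [PartialOrder G]
    [CovariantClass G G (· + ·) (· ≤ ·)]
    (hG_norm : ∀ z w : G, 0 ≤ z → z ≤ w → ‖z‖ ≤ ‖w‖)
    (Φ : E →L[ℝ] F →L[ℝ] G)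
    (hΦ_pos : ∀ (z : E) (w : F), 0 ≤ z → 0 ≤ w → 0 ≤ Φ z w)
    (x : ℕ → E) (y : ℕ → F)
    (hx_pos : ∀ n, 1 ≤ n → 0 ≤ x n)
    (hx_anti : ∀ n, 1 ≤ n → x (n + 1) ≤ x n)
    (hx_norm : Tendsto (fun n => ‖x n‖) atTop (𝓝 0))
    (hy_pos : ∀ n, 1 ≤ n → 0 ≤ y n)
    (S : G)
    (hS : Tendsto (fun n => ∑ k ∈ Finset.Icc 1 n, Φ (x k) (y k)) atTop (𝓝 S)) :
    Tendsto
      (fun n => ∑ m ∈ Finset.Icc 1 n, Φ (x m - x (m + 1)) (∑ k ∈ Finset.Icc 1 m, y k))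
      atTop (𝓝 S) := by
  set Y : ℕ → F := fun n => ∑ k ∈ Icc 1 n, y k
  set Sn : ℕ → G := fun n => ∑ k ∈ Icc 1 n, Φ (x k) (y k)
  have hx : AntitoneOn x (Set.Ici 1) := antitoneOn_nat_Ici_of_succ_le hx_anti
  have hY : ∀ n, 0 ≤ Y n := fun n =>
    sum_nonneg fun k hk => hy_pos k (mem_Icc.1 hk).1
  have h_tail : Tendsto (fun n => Φ (x (n + 1)) (Y n)) atTop (𝓝 0) := by
    refine tendsto_zero_of_norm_le_add_dist hS.cauchySeq
      (u := fun n M => ‖Φ‖ * ‖x (n + 1)‖ * ‖Y M‖) (fun M => ?_) fun M n hMn => ?_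
    · simpa using ((hx_norm.comp (tendsto_add_atTop_nat 1)).const_mul ‖Φ‖).mul_const ‖Y M‖
    · have hle : Φ (x (n + 1)) (Y n) ≤ Φ (x (n + 1)) (Y M) + (Sn n - Sn M) :=
        Φ.toLinearMap₁₂.apply_le_apply_add_sub hΦ_pos hx hy_pos hMn
      calc ‖Φ (x (n + 1)) (Y n)‖ ≤ ‖Φ (x (n + 1)) (Y M) + (Sn n - Sn M)‖ :=
            hG_norm _ _ (hΦ_pos _ _ (hx_pos _ n.succ_pos) (hY n)) hle
        _ ≤ ‖Φ (x (n + 1)) (Y M)‖ + dist (Sn n) (Sn M) := by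
            rw [dist_eq_norm]; exact norm_add_le _ _
        _ ≤ ‖Φ‖ * ‖x (n + 1)‖ * ‖Y M‖ + dist (Sn n) (Sn M) := by
            gcongr; exact Φ.le_opNorm₂ _ _
  simpa using (hS.sub h_tail).congr fun n => (Φ.toLinearMap₁₂.sum_Icc_by_parts₂ x y n).symm

/-- Abel partial summation for series in ordered Banach spaces (forward direction):
if `∑ Φ(xₙ, yₙ)` converges with sum `S`, then `∑ Φ(xₙ − xₙ₊₁, ∑_{k=1}^n y_k)`
converges with the same sum `S`. -/
theorem abel_partial_summation_stmt2
    {E F G : Type*}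
    [NormedAddCommGroup E] [NormedSpace ℝ E] [CompleteSpace E] [PartialOrder E]
    [CovariantClass E E (· + ·) (· ≤ ·)]
    [NormedAddCommGroup F] [NormedSpace ℝ F] [CompleteSpace F] [PartialOrder F]
    [CovariantClass F F (· + ·) (· ≤ ·)]
    [NormedAddCommGroup G] [NormedSpace ℝ G] [CompleteSpace G] [PartialOrder G]
    [CovariantClass G G (· + ·) (· ≤ ·)]
    (hE_smul : ∀ (c : ℝ) (z : E), 0 ≤ c → 0 ≤ z → 0 ≤ c • z)
    (hE_gen : ∀ z : E, ∃ p q : E, 0 ≤ p ∧ 0 ≤ q ∧ z = p - q)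
    (hE_norm : ∀ z w : E, 0 ≤ z → z ≤ w → ‖z‖ ≤ ‖w‖)
    (hF_smul : ∀ (c : ℝ) (z : F), 0 ≤ c → 0 ≤ z → 0 ≤ c • z)
    (hF_gen : ∀ z : F, ∃ p q : F, 0 ≤ p ∧ 0 ≤ q ∧ z = p - q)
    (hF_norm : ∀ z w : F, 0 ≤ z → z ≤ w → ‖z‖ ≤ ‖w‖)
    (hG_smul : ∀ (c : ℝ) (z : G), 0 ≤ c → 0 ≤ z → 0 ≤ c • z)
    (hG_gen : ∀ z : G, ∃ p q : G, 0 ≤ p ∧ 0 ≤ q ∧ z = p - q)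
    (hG_norm : ∀ z w : G, 0 ≤ z → z ≤ w → ‖z‖ ≤ ‖w‖)
    (Φ : E →L[ℝ] F →L[ℝ] G)
    (hΦ_pos : ∀ (z : E) (w : F), 0 ≤ z → 0 ≤ w → 0 ≤ Φ z w)
    (x : ℕ → E) (y : ℕ → F)
    (hx_pos : ∀ n, 1 ≤ n → 0 ≤ x n)
    (hx_anti : ∀ n, 1 ≤ n → x (n + 1) ≤ x n)
    (hx_norm : Tendsto (fun n => ‖x n‖) atTop (𝓝 0))
    (hy_pos : ∀ n, 1 ≤ n → 0 ≤ y n)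
    (S : G)
    (hS : Tendsto (fun n => ∑ k ∈ Finset.Icc 1 n, Φ (x k) (y k)) atTop (𝓝 S)) :
    Tendsto
      (fun n => ∑ m ∈ Finset.Icc 1 n, Φ (x m - x (m + 1)) (∑ k ∈ Finset.Icc 1 m, y k))
      atTop (𝓝 S) :=
  abel_partial_summation_stmt2_general hG_norm Φ hΦ_pos x y hx_pos hx_anti hx_norm hy_pos S hS
end

section
/- Let E, F, G be ordered Banach spaces and let Φ : E × F → G be a continuous positive bilinear map. Let (xₙ)ₙ≥1 be a decreasing sequence of positive elements of E with ‖xₙ‖ → 0, and let (yₙ)ₙ≥1 be a sequence of positive elements of F. If the series ∑ₙ Φ(xₙ − xₙ₊₁, ∑_{k=1}^{n} y_k) converges in G, then the series ∑ₙ Φ(xₙ, yₙ) also converges in G and the two series have the same sum. -/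
/-!
Writing `Yₙ = ∑_{k ≤ n} y_k` and `Tₙ` for the partial sums of `∑ Φ(xₘ − xₘ₊₁, Yₘ)`, summation by
parts gives `∑_{k ≤ n} Φ(x_k, y_k) = Tₙ + Φ(xₙ₊₁, Yₙ)`, so it suffices that `Φ(x_{N+1}, Y_N) → 0`.
Since `Y` increases and `Φ` is positive, `0 ≤ Φ(x_{N+1}, Y_N) ≤ Tₙ − T_N + Φ(xₙ₊₁, Y_N)` for `n ≥ N`;
letting `n → ∞` and using the monotonicity of the norm gives `‖Φ(x_{N+1}, Y_N)‖ ≤ ‖S − T_N‖ → 0`.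
-/

open Filter Topology Finset

namespace LinearMap

variable {R M N P : Type*} [CommSemiring R] [AddCommGroup M] [AddCommGroup N] [AddCommGroup P]
  [Module R M] [Module R N] [Module R P]

theorem sum_Icc_one_by_parts (B : M →ₗ[R] N →ₗ[R] P) (x : ℕ → M) (y : ℕ → N) (n : ℕ) :
    ∑ k ∈ Icc 1 n, B (x k) (y k) =
      ∑ m ∈ Icc 1 n, B (x m - x (m + 1)) (∑ k ∈ Icc 1 m, y k) +
        B (x (n + 1)) (∑ k ∈ Icc 1 n, y k) := by
  induction n with
  | zero => simp
  | succ n ih =>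
    simp only [sum_Icc_succ_top (Nat.le_add_left 1 n), ih, map_add, map_sub, sub_apply]
    abel

variable [Preorder M] [Preorder N] [Preorder P] [AddLeftMono M] [AddLeftMono N] [AddLeftMono P]

theorem apply_le_sum_Icc_sub_add (B : M →ₗ[R] N →ₗ[R] P)
    (hB : ∀ z w, 0 ≤ z → 0 ≤ w → 0 ≤ B z w) {x : ℕ → M} {Y : ℕ → N}
    (hx : ∀ m, 1 ≤ m → x (m + 1) ≤ x m) (hY : Monotone Y) {N n : ℕ} (hNn : N ≤ n) :
    B (x (N + 1)) (Y N) ≤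
      (∑ m ∈ Icc 1 n, B (x m - x (m + 1)) (Y m) - ∑ m ∈ Icc 1 N, B (x m - x (m + 1)) (Y m)) +
        B (x (n + 1)) (Y N) := by
  induction n, hNn using Nat.le_induction with
  | base => simp
  | succ n hNn ih =>
    have hstep : 0 ≤ B (x (n + 1) - x (n + 2)) (Y (n + 1) - Y N) :=
      hB _ _ (sub_nonneg.2 (hx _ (Nat.le_add_left 1 n))) (sub_nonneg.2 (hY (Nat.le_succ_of_le hNn)))
    refine ih.trans (le_of_sub_nonneg ?_)
    convert hstep using 1
    simp only [sum_Icc_succ_top (Nat.le_add_left 1 n), map_sub, sub_apply]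
    abel

end LinearMap

theorem tendsto_nhds_zero_of_le_sub_add {P : Type*} [NormedAddCommGroup P] [LE P]
    (hP : ∀ z w : P, 0 ≤ z → z ≤ w → ‖z‖ ≤ ‖w‖) {T R : ℕ → P} {u : ℕ → ℕ → P} {S : P}
    (hT : Tendsto T atTop (𝓝 S)) (hu : ∀ N, Tendsto (u N) atTop (𝓝 0))
    (hR : ∀ᶠ N in atTop, 0 ≤ R N ∧ ∀ᶠ n in atTop, R N ≤ T n - T N + u N n) :
    Tendsto R atTop (𝓝 0) := by
  refine squeeze_zero_norm' (a := fun N => ‖T N - S‖) ?_ (tendsto_iff_norm_sub_tendsto_zero.1 hT)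
  filter_upwards [hR] with N ⟨hR0, hRle⟩
  have hlim : Tendsto (fun n => ‖T n - T N + u N n‖) atTop (𝓝 ‖S - T N‖) := by
    simpa using ((hT.sub_const (T N)).add (hu N)).norm
  rw [norm_sub_rev]
  exact ge_of_tendsto hlim (hRle.mono fun n => hP _ _ hR0)

theorem abel_partial_summation_stmt3_general
    {E F G : Type*}
    [NormedAddCommGroup E] [NormedSpace ℝ E] [PartialOrder E]
    [CovariantClass E E (· + ·) (· ≤ ·)]
    [NormedAddCommGroup F] [NormedSpace ℝ F] [PartialOrder F]
    [CovariantClass F F (· + ·) (· ≤ ·)]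
    [NormedAddCommGroup G] [NormedSpace ℝ G] [PartialOrder G]
    [CovariantClass G G (· + ·) (· ≤ ·)]
    (hG_norm : ∀ z w : G, 0 ≤ z → z ≤ w → ‖z‖ ≤ ‖w‖)
    (Φ : E →L[ℝ] F →L[ℝ] G)
    (hΦ_pos : ∀ (z : E) (w : F), 0 ≤ z → 0 ≤ w → 0 ≤ Φ z w)
    (x : ℕ → E) (y : ℕ → F)
    (hx_pos : ∀ n, 1 ≤ n → 0 ≤ x n)
    (hx_anti : ∀ n, 1 ≤ n → x (n + 1) ≤ x n)
    (hx_norm : Tendsto (fun n => ‖x n‖) atTop (𝓝 0))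
    (hy_pos : ∀ n, 1 ≤ n → 0 ≤ y n)
    (S : G)
    (hS : Tendsto
      (fun n => ∑ m ∈ Finset.Icc 1 n, Φ (x m - x (m + 1)) (∑ k ∈ Finset.Icc 1 m, y k))
      atTop (𝓝 S)) :
    Tendsto (fun n => ∑ k ∈ Finset.Icc 1 n, Φ (x k) (y k)) atTop (𝓝 S) := by
  set Y : ℕ → F := fun n => ∑ k ∈ Icc 1 n, y k
  have hY_nonneg : ∀ n, 0 ≤ Y n := fun n => sum_nonneg fun k hk => hy_pos k (mem_Icc.1 hk).1
  have hY_mono : Monotone Y := fun N n hNn => sum_le_sum_of_subset_of_nonneg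
    (Icc_subset_Icc le_rfl hNn) fun k hk _ => hy_pos k (mem_Icc.1 hk).1
  have hx0 : Tendsto (fun n => x (n + 1)) atTop (𝓝 0) :=
    (tendsto_zero_iff_norm_tendsto_zero.2 hx_norm).comp (tendsto_add_atTop_nat 1)
  have hR : Tendsto (fun N => Φ (x (N + 1)) (Y N)) atTop (𝓝 0) := by
    exact tendsto_nhds_zero_of_le_sub_add hG_norm hS
      (fun N => (Φ.flip (Y N)).continuous.tendsto' 0 0 (map_zero _) |>.comp hx0)
      (.of_forall fun N => ⟨hΦ_pos _ _ (hx_pos _ (Nat.le_add_left 1 N)) (hY_nonneg N),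
        eventually_atTop.2 ⟨N, fun n hNn =>
          Φ.toLinearMap₁₂.apply_le_sum_Icc_sub_add hΦ_pos hx_anti hY_mono hNn⟩⟩)
  rw [← add_zero S]
  exact (hS.add hR).congr fun n => (Φ.toLinearMap₁₂.sum_Icc_one_by_parts x y n).symm

/-- Abel partial summation for series in ordered Banach spaces (converse direction):
if `∑ Φ(xₙ − xₙ₊₁, ∑_{k=1}^n y_k)` converges with sum `S`, then `∑ Φ(xₙ, yₙ)`
converges with the same sum `S`. -/
theorem abel_partial_summation_stmt3
    {E F G : Type*}
    [NormedAddCommGroup E] [NormedSpace ℝ E] [CompleteSpace E] [PartialOrder E]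
    [CovariantClass E E (· + ·) (· ≤ ·)]
    [NormedAddCommGroup F] [NormedSpace ℝ F] [CompleteSpace F] [PartialOrder F]
    [CovariantClass F F (· + ·) (· ≤ ·)]
    [NormedAddCommGroup G] [NormedSpace ℝ G] [CompleteSpace G] [PartialOrder G]
    [CovariantClass G G (· + ·) (· ≤ ·)]
    (hE_smul : ∀ (c : ℝ) (z : E), 0 ≤ c → 0 ≤ z → 0 ≤ c • z)
    (hE_gen : ∀ z : E, ∃ p q : E, 0 ≤ p ∧ 0 ≤ q ∧ z = p - q)
    (hE_norm : ∀ z w : E, 0 ≤ z → z ≤ w → ‖z‖ ≤ ‖w‖)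
    (hF_smul : ∀ (c : ℝ) (z : F), 0 ≤ c → 0 ≤ z → 0 ≤ c • z)
    (hF_gen : ∀ z : F, ∃ p q : F, 0 ≤ p ∧ 0 ≤ q ∧ z = p - q)
    (hF_norm : ∀ z w : F, 0 ≤ z → z ≤ w → ‖z‖ ≤ ‖w‖)
    (hG_smul : ∀ (c : ℝ) (z : G), 0 ≤ c → 0 ≤ z → 0 ≤ c • z)
    (hG_gen : ∀ z : G, ∃ p q : G, 0 ≤ p ∧ 0 ≤ q ∧ z = p - q)
    (hG_norm : ∀ z w : G, 0 ≤ z → z ≤ w → ‖z‖ ≤ ‖w‖)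
    (Φ : E →L[ℝ] F →L[ℝ] G)
    (hΦ_pos : ∀ (z : E) (w : F), 0 ≤ z → 0 ≤ w → 0 ≤ Φ z w)
    (x : ℕ → E) (y : ℕ → F)
    (hx_pos : ∀ n, 1 ≤ n → 0 ≤ x n)
    (hx_anti : ∀ n, 1 ≤ n → x (n + 1) ≤ x n)
    (hx_norm : Tendsto (fun n => ‖x n‖) atTop (𝓝 0))
    (hy_pos : ∀ n, 1 ≤ n → 0 ≤ y n)
    (S : G)
    (hS : Tendsto
      (fun n => ∑ m ∈ Finset.Icc 1 n, Φ (x m - x (m + 1)) (∑ k ∈ Finset.Icc 1 m, y k))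
      atTop (𝓝 S)) :
    Tendsto (fun n => ∑ k ∈ Finset.Icc 1 n, Φ (x k) (y k)) atTop (𝓝 S) :=
  abel_partial_summation_stmt3_general hG_norm Φ hΦ_pos x y hx_pos hx_anti hx_norm hy_pos S hS
end

section
/- Let E be an ordered Banach space with a strong order unit u > 0 whose norm is associated to u. Let (xₙ)ₙ≥1 be a sequence of positive elements of E such that (1/n)·∑_{k=1}^{n} x_k → 0 in norm. Then for every ε > 0 the set A_ε = {n ∈ ℕ : ε·u ≤ xₙ} has zero density. -/
/-!
If `ε • u ≤ x k` for `m` of the indices `k ≤ n`, positivity of the `x k` gives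
`(m * ε / n) • u ≤ (1 / n) ∑_{k ≤ n} x k`. Since the norm is the order-unit norm,
`l • u ≤ y` forces `l ≤ ‖y‖`, so the density `m / n` is at most `‖(1 / n) ∑_{k ≤ n} x k‖ / ε`,
which tends to `0`.
-/

open Filter Topology Finset

lemma Finset.card_filter_le_nsmul_le_sum {ι M : Type*} [AddCommMonoid M] [PartialOrder M]
    [IsOrderedAddMonoid M] (s : Finset ι) (f : ι → M) (a : M) [DecidablePred (a ≤ f ·)]
    (hf : ∀ i ∈ s, 0 ≤ f i) : #{i ∈ s | a ≤ f i} • a ≤ ∑ i ∈ s, f i :=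
  calc #{i ∈ s | a ≤ f i} • a ≤ ∑ i ∈ s with a ≤ f i, f i :=
        card_nsmul_le_sum _ _ _ fun _ hi => (mem_filter.mp hi).2
    _ ≤ ∑ i ∈ s, f i :=
        sum_le_sum_of_subset_of_nonneg (filter_subset _ _) fun i hi _ => hf i hi

section OrderUnitNorm

variable {E : Type*} [NormedAddCommGroup E] [Module ℝ E] [PartialOrder E]
  [IsOrderedAddMonoid E] [PosSMulMono ℝ E] {u : E}

lemma le_norm_of_smul_unit_le (hu : 0 < u) (h_unit : ∀ z : E, z ≤ ‖z‖ • u) {y : E} {l : ℝ}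
    (h : l • u ≤ y) : l ≤ ‖y‖ :=
  have : PosSMulStrictMono ℝ E := PosSMulMono.toPosSMulStrictMono
  le_of_smul_le_smul_right (h.trans (h_unit y)) hu

lemma card_filter_div_mul_le_norm_average (hu : 0 < u) (h_unit : ∀ z : E, z ≤ ‖z‖ • u)
    {ι : Type*} (s : Finset ι) (x : ι → E) (hx : ∀ i ∈ s, 0 ≤ x i) (ε : ℝ)
    [DecidablePred (ε • u ≤ x ·)] :
    (#{i ∈ s | ε • u ≤ x i} : ℝ) / #s * ε ≤ ‖(#s : ℝ)⁻¹ • ∑ i ∈ s, x i‖ := by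
  refine le_norm_of_smul_unit_le hu h_unit ?_
  calc ((#{i ∈ s | ε • u ≤ x i} : ℝ) / #s * ε) • u
    _ = (#s : ℝ)⁻¹ • #{i ∈ s | ε • u ≤ x i} • ε • u := by
      rw [← Nat.cast_smul_eq_nsmul ℝ, smul_smul, smul_smul, div_eq_inv_mul, mul_assoc]
    _ ≤ (#s : ℝ)⁻¹ • ∑ i ∈ s, x i :=
      smul_le_smul_of_nonneg_left (card_filter_le_nsmul_le_sum s x _ hx) (by positivity)

end OrderUnitNorm

theorem abel_partial_summation_stmt7_general
    {E : Type*}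
    [NormedAddCommGroup E] [NormedSpace ℝ E] [PartialOrder E]
    [CovariantClass E E (· + ·) (· ≤ ·)]
    (hE_smul : ∀ (c : ℝ) (z : E), 0 ≤ c → 0 ≤ z → 0 ≤ c • z)
    (u : E) (hu : 0 < u)
    -- the norm of `E` is the one associated to the strong order unit `u`
    (h_unit : ∀ (z : E) (l : ℝ), 0 ≤ l → (‖z‖ ≤ l ↔ -(l • u) ≤ z ∧ z ≤ l • u))
    (x : ℕ → E)
    (hx_pos : ∀ n, 1 ≤ n → 0 ≤ x n)
    (hcesaro :
      Tendsto (fun n : ℕ => (n : ℝ)⁻¹ • ∑ k ∈ Finset.Icc 1 n, x k) atTop (𝓝 0)) :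
    ∀ ε : ℝ, 0 < ε →
      Tendsto
        (fun n : ℕ => (({k : ℕ | ε • u ≤ x k} ∩ Set.Icc 1 n).ncard : ℝ) / n)
        atTop (𝓝 0) := by
  intro ε hε
  classical
  have : IsOrderedAddMonoid E := { add_le_add_left := fun _ _ h c => add_le_add_left h c }
  have : PosSMulMono ℝ E := .of_smul_nonneg fun c hc z hz => hE_smul c z hc hz
  have h_le_norm_smul (z : E) : z ≤ ‖z‖ • u := ((h_unit z _ (norm_nonneg z)).1 le_rfl).2
  have h_ncard (n : ℕ) :
      ({k : ℕ | ε • u ≤ x k} ∩ Set.Icc 1 n).ncard = #{k ∈ Icc 1 n | ε • u ≤ x k} := by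
    rw [← Set.ncard_coe_finset]
    congr 1
    ext k
    simp [and_comm]
  refine squeeze_zero (fun n => by positivity) (fun n => ?_)
    (by simpa using hcesaro.norm.div_const ε)
  rw [h_ncard, le_div_iff₀ hε]
  simpa using card_filter_div_mul_le_norm_average hu h_le_norm_smul (Icc 1 n) x
    (fun k hk => hx_pos k (mem_Icc.mp hk).1) ε

/-- Koopman–von Neumann type theorem in ordered Banach spaces with a strong order unit:
if `(1/n) ∑_{k=1}^n x_k → 0` in norm for a sequence of positive elements, then for every
`ε > 0` the set `A_ε = {n : ε·u ≤ xₙ}` has zero density. -/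
theorem abel_partial_summation_stmt7
    {E : Type*}
    [NormedAddCommGroup E] [NormedSpace ℝ E] [CompleteSpace E] [PartialOrder E]
    [CovariantClass E E (· + ·) (· ≤ ·)]
    (hE_smul : ∀ (c : ℝ) (z : E), 0 ≤ c → 0 ≤ z → 0 ≤ c • z)
    (hE_gen : ∀ z : E, ∃ p q : E, 0 ≤ p ∧ 0 ≤ q ∧ z = p - q)
    (u : E) (hu : 0 < u)
    -- the norm of `E` is the one associated to the strong order unit `u`
    (h_unit : ∀ (z : E) (l : ℝ), 0 ≤ l → (‖z‖ ≤ l ↔ -(l • u) ≤ z ∧ z ≤ l • u))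
    (x : ℕ → E)
    (hx_pos : ∀ n, 1 ≤ n → 0 ≤ x n)
    (hcesaro :
      Tendsto (fun n : ℕ => (n : ℝ)⁻¹ • ∑ k ∈ Finset.Icc 1 n, x k) atTop (𝓝 0)) :
    ∀ ε : ℝ, 0 < ε →
      Tendsto
        (fun n : ℕ => (({k : ℕ | ε • u ≤ x k} ∩ Set.Icc 1 n).ncard : ℝ) / n)
        atTop (𝓝 0) :=
  abel_partial_summation_stmt7_general hE_smul u hu h_unit x hx_pos hcesaro
end

section
/- Let E be an ordered Banach space with a strong order unit u > 0 whose norm is associated to u, and let (xₙ)ₙ≥1 be a sequence of positive elements of E such that the series ∑ₙ xₙ converges. Then for every ε > 0 the set {n ∈ ℕ : ε·u ≤ n·xₙ} has zero density (i.e., the sequence (n·xₙ)ₙ converges in density to 0). -/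
open Filter Topology

/-! If `k ∈ A = {k | ε • u ≤ k • xₖ}` and `m < k ≤ n`, then `xₖ ≥ (ε / n) • u`; summing over
`A ∩ (m, n]` and using positivity of the other terms gives
`(|A ∩ (m, n]| · ε / n) • u ≤ ∑_{m < k ≤ n} xₖ ≤ ‖∑_{m < k ≤ n} xₖ‖ • u`.
Since the partial sums are Cauchy, for `m` large this gives `|A ∩ (m, n]| ≤ δ n` for all `n ≥ m`,
and the first `m` indices only contribute `m / n → 0` to the density. -/

theorem ncard_inter_Icc_one_le (A : Set ℕ) (m n : ℕ) :
    (A ∩ Set.Icc 1 n).ncard ≤ m + (A ∩ Set.Ioc m n).ncard := by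
  calc (A ∩ Set.Icc 1 n).ncard ≤ (Set.Icc 1 m ∪ A ∩ Set.Ioc m n).ncard := by
        refine Set.ncard_le_ncard (fun k ⟨hkA, hk1, hkn⟩ => ?_) ((Set.finite_Icc 1 m).union
          ((Set.finite_Ioc m n).inter_of_right A))
        rcases le_or_gt k m with hkm | hmk
        · exact Or.inl ⟨hk1, hkm⟩
        · exact Or.inr ⟨hkA, hmk, hkn⟩
    _ ≤ (Set.Icc 1 m).ncard + (A ∩ Set.Ioc m n).ncard := Set.ncard_union_le _ _
    _ = m + (A ∩ Set.Ioc m n).ncard := by simp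

theorem tendsto_ncard_inter_Icc_div_atTop_zero {A : Set ℕ}
    (h : ∀ δ > 0, ∃ m, ∀ n ≥ m, ((A ∩ Set.Ioc m n).ncard : ℝ) ≤ δ * n) :
    Tendsto (fun n : ℕ => ((A ∩ Set.Icc 1 n).ncard : ℝ) / n) atTop (𝓝 0) := by
  refine tendsto_order.2 ⟨fun a ha => Eventually.of_forall fun n => ha.trans_le (by positivity),
    fun δ hδ => ?_⟩
  obtain ⟨m, hm⟩ := h (δ / 2) (half_pos hδ)
  have hm_div : Tendsto (fun n : ℕ => (m : ℝ) / n) atTop (𝓝 0) :=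
    tendsto_const_div_atTop_nhds_zero_nat _
  filter_upwards [hm_div.eventually (gt_mem_nhds (half_pos hδ)), eventually_ge_atTop m,
    eventually_gt_atTop 0] with n hmn hn hn0
  have hn0' : (0 : ℝ) < n := by exact_mod_cast hn0
  rw [div_lt_iff₀ hn0'] at hmn ⊢
  have htail := hm n hn
  have hcard : ((A ∩ Set.Icc 1 n).ncard : ℝ) ≤ m + (A ∩ Set.Ioc m n).ncard := by
    exact_mod_cast ncard_inter_Icc_one_le A m n
  linarith

theorem exists_norm_sum_Ioc_lt_of_tendsto {E : Type*} [SeminormedAddCommGroup E] {x : ℕ → E}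
    {S : E} (h : Tendsto (fun n => ∑ k ∈ Finset.Icc 1 n, x k) atTop (𝓝 S)) {η : ℝ}
    (hη : 0 < η) : ∃ m, ∀ n ≥ m, ‖∑ k ∈ Finset.Ioc m n, x k‖ < η := by
  obtain ⟨m, hm⟩ := Metric.cauchySeq_iff'.1 h.cauchySeq η hη
  refine ⟨m, fun n hn => ?_⟩
  have hIcc : ∀ p, Finset.Icc 1 p = Finset.Ioc 0 p := Finset.Icc_add_one_left_eq_Ioc 0
  have := hm n hn
  rwa [dist_eq_norm, hIcc, hIcc, ← Finset.sum_Ioc_consecutive x (Nat.zero_le m) hn,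
    add_sub_cancel_left] at this

section OrderUnit

variable {E : Type*} [AddCommGroup E] [Module ℝ E] [PartialOrder E] [IsOrderedAddMonoid E]
  [IsOrderedModule ℝ E] {u : E}

theorem card_mul_le_of_sum_le (hu : 0 < u) {x : ℕ → E} {s T : Finset ℕ} (hTs : T ⊆ s)
    (hx : ∀ k ∈ s, 0 ≤ x k) {c t : ℝ} (hT : ∀ k ∈ T, c • u ≤ x k)
    (hsum : ∑ k ∈ s, x k ≤ t • u) : (T.card : ℝ) * c ≤ t := by
  have : SMulPosStrictMono ℝ E := SMulPosMono.toSMulPosStrictMono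
  refine (smul_le_smul_iff_of_pos_right hu).1 ?_
  calc ((T.card : ℝ) * c) • u = T.card • (c • u) := by rw [mul_smul, Nat.cast_smul_eq_nsmul]
    _ ≤ ∑ k ∈ T, x k := Finset.card_nsmul_le_sum _ _ _ hT
    _ ≤ ∑ k ∈ s, x k := Finset.sum_le_sum_of_subset_of_nonneg hTs fun k hk _ => hx k hk
    _ ≤ t • u := hsum

theorem div_smul_le_of_smul_le_nsmul {ε : ℝ} (hε : 0 ≤ ε) (hu : 0 ≤ u) {z : E} {k n : ℕ}
    (hk : 0 < k) (hkn : k ≤ n) (h : ε • u ≤ k • z) : (ε / n) • u ≤ z := by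
  have hk' : (0 : ℝ) < k := by exact_mod_cast hk
  calc (ε / n) • u ≤ (ε / k) • u := by gcongr
    _ = (k : ℝ)⁻¹ • (ε • u) := by rw [smul_smul, inv_mul_eq_div]
    _ ≤ (k : ℝ)⁻¹ • ((k : ℝ) • z) := by rw [Nat.cast_smul_eq_nsmul]; gcongr
    _ = z := inv_smul_smul₀ hk'.ne' z

end OrderUnit

theorem mul_ncard_le_mul_norm_sum_Ioc {E : Type*} [NormedAddCommGroup E] [NormedSpace ℝ E]
    [PartialOrder E] [IsOrderedAddMonoid E] [IsOrderedModule ℝ E] {u : E} (hu : 0 < u)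
    (hle : ∀ z : E, z ≤ ‖z‖ • u) {x : ℕ → E} (hx : ∀ k, 1 ≤ k → 0 ≤ x k) {ε : ℝ} (hε : 0 < ε)
    (m n : ℕ) :
    ε * ({k : ℕ | ε • u ≤ k • x k} ∩ Set.Ioc m n).ncard ≤ n * ‖∑ k ∈ Finset.Ioc m n, x k‖ := by
  rcases n.eq_zero_or_pos with rfl | hn
  · simp
  have hn' : (0 : ℝ) < n := by exact_mod_cast hn
  have hfin := (Set.finite_Ioc m n).inter_of_right {k : ℕ | ε • u ≤ k • x k}
  have hcard := card_mul_le_of_sum_le hu (s := Finset.Ioc m n) (T := hfin.toFinset)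
    (fun k hk => Finset.mem_Ioc.2 (hfin.mem_toFinset.1 hk).2)
    (fun k hk => hx k (Nat.one_le_of_lt (Finset.mem_Ioc.1 hk).1)) (c := ε / n)
    (fun k hk => by
      obtain ⟨hkA, hmk, hkn⟩ := hfin.mem_toFinset.1 hk
      exact div_smul_le_of_smul_le_nsmul hε.le hu.le (by omega) hkn hkA)
    (hle _)
  rw [Set.ncard_eq_toFinset_card _ hfin]
  rw [mul_div_assoc', div_le_iff₀ hn'] at hcard
  linarith

theorem abel_partial_summation_stmt9_general
    {E : Type*}
    [NormedAddCommGroup E] [NormedSpace ℝ E] [PartialOrder E]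
    [CovariantClass E E (· + ·) (· ≤ ·)]
    (hE_smul : ∀ (c : ℝ) (z : E), 0 ≤ c → 0 ≤ z → 0 ≤ c • z)
    (u : E) (hu : 0 < u)
    -- the norm of `E` is the one associated to the strong order unit `u`
    (h_unit : ∀ (z : E) (l : ℝ), 0 ≤ l → (‖z‖ ≤ l ↔ -(l • u) ≤ z ∧ z ≤ l • u))
    (x : ℕ → E)
    (hx_pos : ∀ n, 1 ≤ n → 0 ≤ x n)
    (hconv : ∃ S : E, Tendsto (fun n => ∑ k ∈ Finset.Icc 1 n, x k) atTop (𝓝 S)) :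
    ∀ ε : ℝ, 0 < ε →
      Tendsto
        (fun n : ℕ => (({k : ℕ | ε • u ≤ k • x k} ∩ Set.Icc 1 n).ncard : ℝ) / n)
        atTop (𝓝 0) := by
  intro ε hε
  have : IsOrderedAddMonoid E := { add_le_add_left := fun _ _ h c => add_le_add_left h c }
  have : IsOrderedModule ℝ E := .of_smul_nonneg fun c hc z hz => hE_smul c z hc hz
  have hle (z : E) : z ≤ ‖z‖ • u := ((h_unit z ‖z‖ (norm_nonneg z)).1 le_rfl).2
  obtain ⟨S, hS⟩ := hconv
  refine tendsto_ncard_inter_Icc_div_atTop_zero fun δ hδ => ?_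
  obtain ⟨m, hm⟩ := exists_norm_sum_Ioc_lt_of_tendsto hS (mul_pos hε hδ)
  refine ⟨m, fun n hn => le_of_mul_le_mul_left ?_ hε⟩
  calc ε * ({k : ℕ | ε • u ≤ k • x k} ∩ Set.Ioc m n).ncard
      ≤ n * ‖∑ k ∈ Finset.Ioc m n, x k‖ := mul_ncard_le_mul_norm_sum_Ioc hu hle hx_pos hε m n
    _ ≤ n * (ε * δ) := by gcongr; exact (hm n hn).le
    _ = ε * (δ * n) := by ring

/-- If `∑ xₙ` is a convergent series of positive elements in an ordered Banach space
whose norm is associated to a strong order unit `u`, then `(n·xₙ)` converges in density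
to `0`: for every `ε > 0` the set `{n : ε·u ≤ n·xₙ}` has zero density. -/
theorem abel_partial_summation_stmt9
    {E : Type*}
    [NormedAddCommGroup E] [NormedSpace ℝ E] [CompleteSpace E] [PartialOrder E]
    [CovariantClass E E (· + ·) (· ≤ ·)]
    (hE_smul : ∀ (c : ℝ) (z : E), 0 ≤ c → 0 ≤ z → 0 ≤ c • z)
    (hE_gen : ∀ z : E, ∃ p q : E, 0 ≤ p ∧ 0 ≤ q ∧ z = p - q)
    (u : E) (hu : 0 < u)
    -- the norm of `E` is the one associated to the strong order unit `u`
    (h_unit : ∀ (z : E) (l : ℝ), 0 ≤ l → (‖z‖ ≤ l ↔ -(l • u) ≤ z ∧ z ≤ l • u))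
    (x : ℕ → E)
    (hx_pos : ∀ n, 1 ≤ n → 0 ≤ x n)
    (hconv : ∃ S : E, Tendsto (fun n => ∑ k ∈ Finset.Icc 1 n, x k) atTop (𝓝 S)) :
    ∀ ε : ℝ, 0 < ε →
      Tendsto
        (fun n : ℕ => (({k : ℕ | ε • u ≤ k • x k} ∩ Set.Icc 1 n).ncard : ℝ) / n)
        atTop (𝓝 0) :=
  abel_partial_summation_stmt9_general hE_smul u hu h_unit x hx_pos hconv
end

section
/- (Jensen–Steffensen inequality) Let x₁, …, xₙ be a monotone family of points in an interval [a, b] (i.e., x₁ ≤ x₂ ≤ ⋯ ≤ xₙ or x₁ ≥ x₂ ≥ ⋯ ≥ xₙ), and let w₁, …, wₙ be real weights such that ∑_{k=1}^{n} w_k = 1 and 0 ≤ ∑_{k=1}^{m} w_k ≤ 1 for every m ∈ {1, …, n}. Then ∑_{k=1}^{n} w_k x_k ∈ [a, b] and every convex function f : [a, b] → ℝ satisfies f(∑_{k=1}^{n} w_k x_k) ≤ ∑_{k=1}^{n} w_k f(x_k). -/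
/-!
By Abel summation, a weighted mean `∑ w k * d k` with Steffensen weights of a monotone sequence
`d` lies between `d 1` and `d n`; in particular `X = ∑ w k * x k ∈ [a, b]`.

For the inequality, pick a slope `c` such that `f X + c * (t - X) ≤ f t` at the finitely many
points `t = x k`. The convex function `g t = f t - (f X + c * (t - X))` vanishes at `X` and is
nonnegative at these points, so by convexity it decreases along them towards `X` from either side.
Cutting `g` at `X` therefore writes `k ↦ g (x k)` as the sum of two nonnegative monotone
sequences, whose weighted means are nonnegative by the first step, and
`∑ w k * g (x k) = ∑ w k * f (x k) - f X`.
-/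

section Abel

variable {w d : ℕ → ℝ} {n : ℕ}

theorem sum_Icc_mul_bounds_of_antitoneOn (hn : 1 ≤ n)
    (hw_partial : ∀ m, 1 ≤ m → m ≤ n →
      0 ≤ ∑ k ∈ Finset.Icc 1 m, w k ∧ ∑ k ∈ Finset.Icc 1 m, w k ≤ 1)
    (hd : AntitoneOn d (Set.Icc 1 n)) :
    (∑ k ∈ Finset.Icc 1 n, w k) * d n ≤ ∑ k ∈ Finset.Icc 1 n, w k * d k ∧
      ∑ k ∈ Finset.Icc 1 n, w k * d k ≤
        (∑ k ∈ Finset.Icc 1 n, w k) * d n + (d 1 - d n) := by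
  induction n, hn using Nat.le_induction with
  | base => simp
  | succ n hn ih =>
    obtain ⟨ihl, ihu⟩ := ih (fun m hm hmn => hw_partial m hm (by omega))
      (hd.mono (Set.Icc_subset_Icc_right n.le_succ))
    obtain ⟨hW0, hW1⟩ := hw_partial n hn n.le_succ
    have hdn : 0 ≤ d n - d (n + 1) :=
      sub_nonneg.2 <| hd ⟨hn, n.le_succ⟩ ⟨by omega, le_rfl⟩ n.le_succ
    rw [Finset.sum_Icc_succ_top (by omega), Finset.sum_Icc_succ_top (by omega)]
    constructor
    · linarith [mul_nonneg hW0 hdn]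
    · linarith [mul_nonneg (sub_nonneg.2 hW1) hdn]

theorem sum_Icc_mul_mem_Icc_of_antitoneOn (hn : 1 ≤ n)
    (hw_sum : ∑ k ∈ Finset.Icc 1 n, w k = 1)
    (hw_partial : ∀ m, 1 ≤ m → m ≤ n →
      0 ≤ ∑ k ∈ Finset.Icc 1 m, w k ∧ ∑ k ∈ Finset.Icc 1 m, w k ≤ 1)
    (hd : AntitoneOn d (Set.Icc 1 n)) :
    ∑ k ∈ Finset.Icc 1 n, w k * d k ∈ Set.Icc (d n) (d 1) := by
  have h := sum_Icc_mul_bounds_of_antitoneOn hn hw_partial hd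
  rw [hw_sum, one_mul] at h
  exact ⟨h.1, by linarith [h.2]⟩

theorem sum_Icc_mul_mem_uIcc (hn : 1 ≤ n) (hw_sum : ∑ k ∈ Finset.Icc 1 n, w k = 1)
    (hw_partial : ∀ m, 1 ≤ m → m ≤ n →
      0 ≤ ∑ k ∈ Finset.Icc 1 m, w k ∧ ∑ k ∈ Finset.Icc 1 m, w k ≤ 1)
    (hd : MonotoneOn d (Set.Icc 1 n) ∨ AntitoneOn d (Set.Icc 1 n)) :
    ∑ k ∈ Finset.Icc 1 n, w k * d k ∈ Set.uIcc (d 1) (d n) := by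
  rcases hd with hd | hd
  · have h := sum_Icc_mul_mem_Icc_of_antitoneOn hn hw_sum hw_partial hd.neg
    simp only [mul_neg, Finset.sum_neg_distrib, Set.mem_Icc, neg_le_neg_iff] at h
    exact Set.Icc_subset_uIcc ⟨h.2, h.1⟩
  · exact Set.Icc_subset_uIcc' (sum_Icc_mul_mem_Icc_of_antitoneOn hn hw_sum hw_partial hd)

theorem sum_Icc_mul_nonneg (hn : 1 ≤ n) (hw_sum : ∑ k ∈ Finset.Icc 1 n, w k = 1)
    (hw_partial : ∀ m, 1 ≤ m → m ≤ n →
      0 ≤ ∑ k ∈ Finset.Icc 1 m, w k ∧ ∑ k ∈ Finset.Icc 1 m, w k ≤ 1)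
    (hd : MonotoneOn d (Set.Icc 1 n) ∨ AntitoneOn d (Set.Icc 1 n)) (hd1 : 0 ≤ d 1)
    (hdn : 0 ≤ d n) : 0 ≤ ∑ k ∈ Finset.Icc 1 n, w k * d k :=
  (le_min hd1 hdn).trans (sum_Icc_mul_mem_uIcc hn hw_sum hw_partial hd).1

end Abel

theorem monotoneOn_or_antitoneOn_comp {α β γ : Type*} [Preorder α] [Preorder β] [Preorder γ]
    {φ : β → γ} {x : α → β} {s : Set α} {t : Set β}
    (hφ : MonotoneOn φ t ∨ AntitoneOn φ t) (hx : MonotoneOn x s ∨ AntitoneOn x s)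
    (hst : Set.MapsTo x s t) : MonotoneOn (φ ∘ x) s ∨ AntitoneOn (φ ∘ x) s := by
  rcases hφ with hφ | hφ <;> rcases hx with hx | hx
  · exact .inl (hφ.comp hx hst)
  · exact .inr (hφ.comp_AntitoneOn hx hst)
  · exact .inr (hφ.comp_MonotoneOn hx hst)
  · exact .inl (hφ.comp hx hst)

theorem monotoneOn_or_antitoneOn_Icc_of_succ {β : Type*} [Preorder β] {x : ℕ → β} {n : ℕ}
    (hx : (∀ k, 1 ≤ k → k < n → x k ≤ x (k + 1)) ∨
      (∀ k, 1 ≤ k → k < n → x (k + 1) ≤ x k)) :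
    MonotoneOn x (Set.Icc 1 n) ∨ AntitoneOn x (Set.Icc 1 n) := by
  refine hx.imp (fun h => monotoneOn_of_le_succ Set.ordConnected_Icc ?_)
    (fun h => antitoneOn_of_succ_le Set.ordConnected_Icc ?_) <;>
  · intro k _ hk hk'
    rw [Order.succ_eq_add_one] at hk' ⊢
    exact h k hk.1 (by simp only [Set.mem_Icc] at hk'; omega)

theorem exists_forall_le_and_forall_ge {α : Type*} [ConditionallyCompleteLattice α]
    {A B : Set α} (hA : BddAbove A) (hB : BddBelow B) (hAB : ∀ a ∈ A, ∀ b ∈ B, a ≤ b) :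
    ∃ c, (∀ a ∈ A, a ≤ c) ∧ ∀ b ∈ B, c ≤ b := by
  obtain ⟨β, hβ⟩ := hB
  refine ⟨sSup (insert β A), fun a ha => le_csSup (hA.insert β) (Set.mem_insert_of_mem β ha),
    fun b hb => csSup_le (Set.insert_nonempty β A) ?_⟩
  rintro a (rfl | ha)
  exacts [hβ hb, hAB a ha b hb]

section Convex

variable {s T : Set ℝ} {f g : ℝ → ℝ} {X : ℝ}

theorem ConvexOn.exists_forall_add_mul_sub_le (hf : ConvexOn ℝ s f) (hX : X ∈ s)
    (hT : T.Finite) (hTs : T ⊆ s) : ∃ c, ∀ t ∈ T, f X + c * (t - X) ≤ f t := by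
  obtain ⟨c, hleft, hright⟩ := exists_forall_le_and_forall_ge
    ((hT.sep (· < X)).image (slope f X)).bddAbove ((hT.sep (X < ·)).image (slope f X)).bddBelow
    (by
      rintro _ ⟨t, ⟨ht, htX⟩, rfl⟩ _ ⟨u, ⟨hu, hXu⟩, rfl⟩
      exact hf.slope_mono hX ⟨hTs ht, htX.ne⟩ ⟨hTs hu, hXu.ne'⟩ (htX.trans hXu).le)
  refine ⟨c, fun t ht => ?_⟩
  rcases lt_trichotomy t X with htX | rfl | hXt
  · have h := hleft _ ⟨t, ⟨ht, htX⟩, rfl⟩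
    rw [slope_def_field, div_le_iff_of_neg (sub_neg.2 htX)] at h
    linarith
  · simp
  · have h := hright _ ⟨t, ⟨ht, hXt⟩, rfl⟩
    rw [slope_def_field, le_div_iff₀ (sub_pos.2 hXt)] at h
    linarith

theorem ConvexOn.antitoneOn_ite_le (hg : ConvexOn ℝ s g) (hX : X ∈ s) (hgX : g X ≤ 0)
    (hTs : T ⊆ s) (hgT : ∀ t ∈ T, 0 ≤ g t) :
    AntitoneOn (fun t => if t ≤ X then g t else 0) T := by
  intro t ht u hu htu
  by_cases huX : u ≤ X
  · have hu' : u ∈ segment ℝ t X := (segment_eq_Icc (htu.trans huX)).symm ▸ ⟨htu, huX⟩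
    simpa [huX, htu.trans huX] using
      (hg.le_on_segment (hTs ht) hX hu').trans (max_le le_rfl (hgX.trans (hgT t ht)))
  · simp only [huX, if_false]
    split_ifs
    exacts [hgT t ht, le_rfl]

theorem ConvexOn.monotoneOn_ite_le (hg : ConvexOn ℝ s g) (hX : X ∈ s) (hgX : g X ≤ 0)
    (hTs : T ⊆ s) (hgT : ∀ t ∈ T, 0 ≤ g t) :
    MonotoneOn (fun t => if t ≤ X then 0 else g t) T := by
  intro t ht u hu htu
  by_cases htX : t ≤ X
  · simp only [htX, if_true]
    split_ifs
    exacts [le_rfl, hgT u hu]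
  · have hXt : X ≤ t := (not_le.1 htX).le
    have ht' : t ∈ segment ℝ X u := (segment_eq_Icc (hXt.trans htu)).symm ▸ ⟨hXt, htu⟩
    have hXu : ¬ u ≤ X := fun h => htX (htu.trans h)
    simpa [htX, hXu] using
      (hg.le_on_segment hX (hTs hu) ht').trans (max_le (hgX.trans (hgT u hu)) le_rfl)

theorem ConvexOn.sum_Icc_mul_comp_nonneg {w x : ℕ → ℝ} {n : ℕ} (hg : ConvexOn ℝ s g)
    (hX : X ∈ s) (hgX : g X ≤ 0) (hn : 1 ≤ n) (hw_sum : ∑ k ∈ Finset.Icc 1 n, w k = 1)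
    (hw_partial : ∀ m, 1 ≤ m → m ≤ n →
      0 ≤ ∑ k ∈ Finset.Icc 1 m, w k ∧ ∑ k ∈ Finset.Icc 1 m, w k ≤ 1)
    (hx : MonotoneOn x (Set.Icc 1 n) ∨ AntitoneOn x (Set.Icc 1 n))
    (hxs : Set.MapsTo x (Set.Icc 1 n) s) (hgx : ∀ k ∈ Set.Icc 1 n, 0 ≤ g (x k)) :
    0 ≤ ∑ k ∈ Finset.Icc 1 n, w k * g (x k) := by
  set T := x '' Set.Icc 1 n
  have hTs : T ⊆ s := hxs.image_subset
  have hgT : ∀ t ∈ T, 0 ≤ g t := by rintro _ ⟨k, hk, rfl⟩; exact hgx k hk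
  have h1 : 1 ∈ Set.Icc 1 n := ⟨le_rfl, hn⟩
  have hn' : n ∈ Set.Icc 1 n := ⟨hn, le_rfl⟩
  have hlow := sum_Icc_mul_nonneg hn hw_sum hw_partial
    (monotoneOn_or_antitoneOn_comp (.inr (hg.antitoneOn_ite_le hX hgX hTs hgT)) hx
      (Set.mapsTo_image x _)) (ite_nonneg (hgx 1 h1) le_rfl) (ite_nonneg (hgx n hn') le_rfl)
  have hhigh := sum_Icc_mul_nonneg hn hw_sum hw_partial
    (monotoneOn_or_antitoneOn_comp (.inl (hg.monotoneOn_ite_le hX hgX hTs hgT)) hx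
      (Set.mapsTo_image x _)) (ite_nonneg le_rfl (hgx 1 h1)) (ite_nonneg le_rfl (hgx n hn'))
  have hsplit : ∀ k, w k * g (x k) =
      w k * (if x k ≤ X then g (x k) else 0) + w k * (if x k ≤ X then 0 else g (x k)) := by
    intro k; split_ifs <;> ring
  rw [Finset.sum_congr rfl fun k _ => hsplit k, Finset.sum_add_distrib]
  exact add_nonneg hlow hhigh

end Convex

theorem abel_partial_summation_stmt13_general
    (a b : ℝ) (n : ℕ) (hn : 1 ≤ n) (x w : ℕ → ℝ)
    (hx_mem : ∀ k, 1 ≤ k → k ≤ n → x k ∈ Set.Icc a b)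
    (hx_mono : (∀ k, 1 ≤ k → k < n → x k ≤ x (k + 1)) ∨
               (∀ k, 1 ≤ k → k < n → x (k + 1) ≤ x k))
    (hw_sum : ∑ k ∈ Finset.Icc 1 n, w k = 1)
    (hw_partial : ∀ m, 1 ≤ m → m ≤ n →
      0 ≤ ∑ k ∈ Finset.Icc 1 m, w k ∧ ∑ k ∈ Finset.Icc 1 m, w k ≤ 1)
    (f : ℝ → ℝ) (hf : ConvexOn ℝ (Set.Icc a b) f) :
    (∑ k ∈ Finset.Icc 1 n, w k * x k) ∈ Set.Icc a b ∧
      f (∑ k ∈ Finset.Icc 1 n, w k * x k) ≤ ∑ k ∈ Finset.Icc 1 n, w k * f (x k) := by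
  have hx := monotoneOn_or_antitoneOn_Icc_of_succ hx_mono
  have hxs : Set.MapsTo x (Set.Icc 1 n) (Set.Icc a b) := fun k hk => hx_mem k hk.1 hk.2
  set X := ∑ k ∈ Finset.Icc 1 n, w k * x k
  have hX : X ∈ Set.Icc a b := Set.uIcc_subset_Icc (hx_mem 1 le_rfl hn) (hx_mem n hn le_rfl)
    (sum_Icc_mul_mem_uIcc hn hw_sum hw_partial hx)
  refine ⟨hX, ?_⟩
  obtain ⟨c, hc⟩ := hf.exists_forall_add_mul_sub_le hX ((Set.finite_Icc 1 n).image x)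
    hxs.image_subset
  have hg : ConvexOn ℝ (Set.Icc a b) (fun t => f t - (f X + c * (t - X))) :=
    hf.sub (((LinearMap.concaveOn (c • LinearMap.id) hf.1).add_const (f X - c * X)).congr
      fun t _ => by
        simp only [Pi.add_apply, LinearMap.smul_apply, LinearMap.id_coe, id_eq, smul_eq_mul]
        ring)
  have hnonneg := hg.sum_Icc_mul_comp_nonneg hX (by simp) hn hw_sum hw_partial hx hxs
    fun k hk => sub_nonneg.2 (hc _ ⟨k, hk, rfl⟩)
  have hsum : ∑ k ∈ Finset.Icc 1 n, w k * (f (x k) - (f X + c * (x k - X))) =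
      ∑ k ∈ Finset.Icc 1 n, w k * f (x k) - f X := by
    simp only [mul_sub, mul_add, Finset.sum_sub_distrib, Finset.sum_add_distrib, ← Finset.sum_mul,
      mul_left_comm _ c, ← Finset.mul_sum, hw_sum]
    ring
  linarith

/-- The Jensen–Steffensen inequality: if `x₁, …, xₙ` is a monotone family in `[a, b]` and
`w₁, …, wₙ` are real weights with `∑ w_k = 1` and `0 ≤ ∑_{k=1}^m w_k ≤ 1` for all `m`,
then `∑ w_k x_k ∈ [a, b]` and every convex `f : [a, b] → ℝ` satisfies
`f(∑ w_k x_k) ≤ ∑ w_k f(x_k)`. -/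
theorem abel_partial_summation_stmt13
    (a b : ℝ) (hab : a ≤ b) (n : ℕ) (hn : 1 ≤ n) (x w : ℕ → ℝ)
    (hx_mem : ∀ k, 1 ≤ k → k ≤ n → x k ∈ Set.Icc a b)
    (hx_mono : (∀ k, 1 ≤ k → k < n → x k ≤ x (k + 1)) ∨
               (∀ k, 1 ≤ k → k < n → x (k + 1) ≤ x k))
    (hw_sum : ∑ k ∈ Finset.Icc 1 n, w k = 1)
    (hw_partial : ∀ m, 1 ≤ m → m ≤ n →
      0 ≤ ∑ k ∈ Finset.Icc 1 m, w k ∧ ∑ k ∈ Finset.Icc 1 m, w k ≤ 1)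
    (f : ℝ → ℝ) (hf : ConvexOn ℝ (Set.Icc a b) f) :
    (∑ k ∈ Finset.Icc 1 n, w k * x k) ∈ Set.Icc a b ∧
      f (∑ k ∈ Finset.Icc 1 n, w k * x k) ≤ ∑ k ∈ Finset.Icc 1 n, w k * f (x k) :=
  abel_partial_summation_stmt13_general a b n hn x w hx_mem hx_mono hw_sum hw_partial f hf
end

section
/- Let E be a Banach lattice, let x₁ ≤ x₂ ≤ ⋯ ≤ xₙ be an increasing family of elements of E, and let w₁, …, wₙ be real weights such that ∑_{k=1}^{n} w_k = 1 and 0 ≤ ∑_{k=1}^{m} w_k ≤ 1 for every m ∈ {1, …, n}. Then |∑_{k=1}^{n} w_k x_k| ≤ ∑_{k=1}^{n} w_k |x_k|, where |z| = sup{−z, z} denotes the lattice modulus. (Equivalently, ∑_{k=1}^{n} w_k x_k⁺ ≥ 0 and ∑_{k=1}^{n} w_k x_k⁻ ≥ 0, where z⁺ = sup{z, 0} and z⁻ = sup{−z, 0}.) -/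
/-!
Abel summation with the partial sums `W m = ∑_{k ≤ m} w k` gives
`∑ w_k y_k = W_n y_n + ∑_{m < n} W_m (y_m - y_{m+1})`. For the antitone family `x_k⁻` every
correction term is nonnegative since `W_m ≥ 0`, so `∑ w_k x_k⁻ ≥ x_n⁻ ≥ 0`. When `W_n = 1` the
same identity reads `∑ w_k y_k = y_1 + ∑_{m < n} (1 - W_m)(y_{m+1} - y_m)`, so for the monotone
family `x_k⁺` one gets `∑ w_k x_k⁺ ≥ x_1⁺ ≥ 0` since `W_m ≤ 1`. The modulus bound follows from
`x = x⁺ - x⁻` and `|x| = x⁺ + x⁻`.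
-/

open Finset Filter

lemma natCast_div_two_pow_smul_nonneg {E : Type*} [Lattice E] [AddCommGroup E]
    [IsOrderedAddMonoid E] [Module ℝ E] {b : E} (hb : 0 ≤ b) (k p : ℕ) :
    0 ≤ ((p : ℝ) / 2 ^ k) • b := by
  induction k generalizing p with
  | zero => simpa [Nat.cast_smul_eq_nsmul] using nsmul_nonneg hb p
  | succ k ih =>
    have halve : 2 • (((p : ℝ) / 2 ^ (k + 1)) • b) = ((p : ℝ) / 2 ^ k) • b := by
      rw [two_nsmul, ← add_smul]
      ring_nf
    exact nsmul_two_semiclosed (halve ▸ ih p)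

/-- Approximate `a ≥ 0` by dyadic rationals and use that the positive cone is closed. -/
instance HasSolidNorm.posSMulMono {E : Type*} [NormedAddCommGroup E] [Lattice E]
    [HasSolidNorm E] [IsOrderedAddMonoid E] [Module ℝ E] [ContinuousSMul ℝ E] :
    PosSMulMono ℝ E :=
  PosSMulMono.of_smul_nonneg fun _ ha b hb =>
    isClosed_nonneg.mem_of_tendsto
      (((tendsto_nat_floor_mul_div_atTop ha).comp
        (tendsto_pow_atTop_atTop_of_one_lt one_lt_two)).smul_const b)
      (Eventually.of_forall fun k => natCast_div_two_pow_smul_nonneg hb k _)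

section AbelSummation

variable {R E : Type*} [Ring R] [AddCommGroup E] [Module R E] (w : ℕ → R) (y : ℕ → E)

theorem sum_Icc_smul_eq_partialSum_smul_add_sum (n : ℕ) :
    ∑ k ∈ Icc 1 n, w k • y k =
      (∑ k ∈ Icc 1 n, w k) • y n + ∑ m ∈ Ico 1 n, (∑ k ∈ Icc 1 m, w k) • (y m - y (m + 1)) := by
  induction n with
  | zero => simp
  | succ n ih =>
    rcases Nat.eq_zero_or_pos n with rfl | hn
    · simp
    rw [sum_Icc_succ_top (by omega), sum_Icc_succ_top (by omega), sum_Ico_succ_top hn, ih,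
      add_smul, smul_sub]
    abel

end AbelSummation

section OrderedModule

variable {E : Type*} [AddCommGroup E] [PartialOrder E] [IsOrderedAddMonoid E] [Module ℝ E]
  [PosSMulMono ℝ E] {w : ℕ → ℝ} {y : ℕ → E} {n : ℕ}

theorem partialSum_smul_le_sum_smul_of_antitone
    (hy : ∀ k, 1 ≤ k → k < n → y (k + 1) ≤ y k)
    (hw : ∀ m, 1 ≤ m → m < n → 0 ≤ ∑ k ∈ Icc 1 m, w k) :
    (∑ k ∈ Icc 1 n, w k) • y n ≤ ∑ k ∈ Icc 1 n, w k • y k := by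
  rw [sum_Icc_smul_eq_partialSum_smul_add_sum]
  refine le_add_of_nonneg_right (sum_nonneg fun m hm => ?_)
  obtain ⟨hm1, hmn⟩ := mem_Ico.1 hm
  exact smul_nonneg (hw m hm1 hmn) (sub_nonneg.2 (hy m hm1 hmn))

theorem le_sum_smul_of_monotone (hy : ∀ k, 1 ≤ k → k < n → y k ≤ y (k + 1))
    (hw : ∀ m, 1 ≤ m → m < n → ∑ k ∈ Icc 1 m, w k ≤ 1) (hw_sum : ∑ k ∈ Icc 1 n, w k = 1) :
    y 1 ≤ ∑ k ∈ Icc 1 n, w k • y k := by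
  have hn : 1 ≤ n := Nat.one_le_iff_ne_zero.2 (by rintro rfl; simp at hw_sum)
  have hdiff : ∑ k ∈ Icc 1 n, w k • y k - y 1 =
      ∑ m ∈ Ico 1 n, (1 - ∑ k ∈ Icc 1 m, w k) • (y (m + 1) - y m) := by
    rw [sum_Icc_smul_eq_partialSum_smul_add_sum, hw_sum, one_smul, add_sub_right_comm,
      ← sum_Ico_sub y hn]
    simp only [sub_smul, one_smul, smul_sub, sum_sub_distrib]
    abel
  refine sub_nonneg.1 (hdiff ▸ sum_nonneg fun m hm => ?_)
  obtain ⟨hm1, hmn⟩ := mem_Ico.1 hm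
  exact smul_nonneg (sub_nonneg.2 (hw m hm1 hmn)) (sub_nonneg.2 (hy m hm1 hmn))

end OrderedModule

theorem abs_sum_smul_le_sum_smul_abs {ι R E : Type*} [Ring R] [Lattice E] [AddCommGroup E]
    [IsOrderedAddMonoid E] [Module R E] (s : Finset ι) (w : ι → R) (x : ι → E)
    (hpos : 0 ≤ ∑ i ∈ s, w i • (x i)⁺) (hneg : 0 ≤ ∑ i ∈ s, w i • (x i)⁻) :
    |∑ i ∈ s, w i • x i| ≤ ∑ i ∈ s, w i • |x i| := by
  have hsplit : ∑ i ∈ s, w i • x i = ∑ i ∈ s, w i • (x i)⁺ - ∑ i ∈ s, w i • (x i)⁻ := by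
    simp only [← sum_sub_distrib, ← smul_sub, posPart_sub_negPart]
  have habs : ∑ i ∈ s, w i • |x i| = ∑ i ∈ s, w i • (x i)⁺ + ∑ i ∈ s, w i • (x i)⁻ := by
    simp only [← sum_add_distrib, ← smul_add, posPart_add_negPart]
  rw [hsplit, habs, sub_eq_add_neg]
  calc _ ≤ |∑ i ∈ s, w i • (x i)⁺| + |-∑ i ∈ s, w i • (x i)⁻| := abs_add_le _ _
    _ = _ := by rw [abs_neg, abs_of_nonneg hpos, abs_of_nonneg hneg]

theorem abel_partial_summation_stmt15_general
    {E : Type*}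
    [NormedAddCommGroup E] [Lattice E] [HasSolidNorm E] [IsOrderedAddMonoid E]
    [NormedSpace ℝ E]
    (n : ℕ) (x : ℕ → E) (w : ℕ → ℝ)
    (hx_mono : ∀ k, 1 ≤ k → k < n → x k ≤ x (k + 1))
    (hw_sum : ∑ k ∈ Finset.Icc 1 n, w k = 1)
    (hw_partial : ∀ m, 1 ≤ m → m ≤ n →
      0 ≤ ∑ k ∈ Finset.Icc 1 m, w k ∧ ∑ k ∈ Finset.Icc 1 m, w k ≤ 1) :
    0 ≤ ∑ k ∈ Finset.Icc 1 n, w k • (x k)⁺ ∧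
    0 ≤ ∑ k ∈ Finset.Icc 1 n, w k • (x k)⁻ ∧
    |∑ k ∈ Finset.Icc 1 n, w k • x k| ≤ ∑ k ∈ Finset.Icc 1 n, w k • |x k| := by
  have hpos : 0 ≤ ∑ k ∈ Icc 1 n, w k • (x k)⁺ :=
    (posPart_nonneg (x 1)).trans <| le_sum_smul_of_monotone
      (fun k hk hkn => posPart_mono (hx_mono k hk hkn))
      (fun m hm hmn => (hw_partial m hm hmn.le).2) hw_sum
  have hneg : 0 ≤ ∑ k ∈ Icc 1 n, w k • (x k)⁻ := by
    have hlow := partialSum_smul_le_sum_smul_of_antitone (y := fun k => (x k)⁻)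
      (fun k hk hkn => negPart_anti (hx_mono k hk hkn))
      (fun m hm hmn => (hw_partial m hm hmn.le).1)
    rw [hw_sum, one_smul] at hlow
    exact (negPart_nonneg (x n)).trans hlow
  exact ⟨hpos, hneg, abs_sum_smul_le_sum_smul_abs _ w x hpos hneg⟩

/-- Jensen–Steffensen type inequality in a Banach lattice: for an increasing family
`x₁ ≤ ⋯ ≤ xₙ` and real weights with `∑ w_k = 1` and `0 ≤ ∑_{k=1}^m w_k ≤ 1`, one has
`∑ w_k x_k⁺ ≥ 0`, `∑ w_k x_k⁻ ≥ 0`, and `|∑ w_k x_k| ≤ ∑ w_k |x_k|`. -/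
theorem abel_partial_summation_stmt15
    {E : Type*}
    [NormedAddCommGroup E] [Lattice E] [HasSolidNorm E] [IsOrderedAddMonoid E]
    [NormedSpace ℝ E] [CompleteSpace E]
    (n : ℕ) (hn : 1 ≤ n) (x : ℕ → E) (w : ℕ → ℝ)
    (hx_mono : ∀ k, 1 ≤ k → k < n → x k ≤ x (k + 1))
    (hw_sum : ∑ k ∈ Finset.Icc 1 n, w k = 1)
    (hw_partial : ∀ m, 1 ≤ m → m ≤ n →
      0 ≤ ∑ k ∈ Finset.Icc 1 m, w k ∧ ∑ k ∈ Finset.Icc 1 m, w k ≤ 1) :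
    0 ≤ ∑ k ∈ Finset.Icc 1 n, w k • (x k)⁺ ∧
    0 ≤ ∑ k ∈ Finset.Icc 1 n, w k • (x k)⁻ ∧
    |∑ k ∈ Finset.Icc 1 n, w k • x k| ≤ ∑ k ∈ Finset.Icc 1 n, w k • |x k| :=
  abel_partial_summation_stmt15_general n x w hx_mono hw_sum hw_partial
end

section
/- Let A₁, …, Aₙ and B₁, …, Bₙ be real symmetric N×N matrices such that A₁ ≥ A₂ ≥ ⋯ ≥ Aₙ ≥ 0 in the Loewner order and ∑_{k=1}^{j} A_k ≤ ∑_{k=1}^{j} B_k in the Loewner order for every j ∈ {1, 2, …, n}. Then ∑_{k=1}^{n} Trace(A_k²) ≤ ∑_{k=1}^{n} Trace(A_k B_k). -/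
/-!
Put `S_j = ∑_{k ≤ j} (B_k - A_k)`. Summation by parts gives
`∑_k tr (A_k (B_k - A_k)) = ∑_{j < n} tr ((A_j - A_{j+1}) S_j) + tr (A_n S_n)`,
and every term on the right is the trace of a product of two positive semidefinite matrices,
which is nonnegative: writing `P = X* X`, `tr (X* X Q) = tr (X Q X*) ≥ 0`.
-/

open Finset

theorem Finset.sum_Icc_mul_eq_sum_Ico_sub_mul_add {R : Type*} [Ring R] (a d : ℕ → R) (n : ℕ) :
    ∑ k ∈ Icc 1 n, a k * d k =
      ∑ j ∈ Ico 1 n, (a j - a (j + 1)) * ∑ k ∈ Icc 1 j, d k + a n * ∑ k ∈ Icc 1 n, d k := by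
  induction n with
  | zero => simp
  | succ n ih =>
    obtain rfl | hn := Nat.eq_zero_or_pos n
    · simp
    rw [sum_Icc_succ_top (by omega), ih, sum_Icc_succ_top (by omega), sum_Ico_succ_top hn]
    noncomm_ring

namespace Matrix

variable {m 𝕜 : Type*} [Fintype m] [RCLike 𝕜]

open scoped ComplexOrder MatrixOrder in
theorem PosSemidef.trace_mul_nonneg {P Q : Matrix m m 𝕜} (hP : P.PosSemidef)
    (hQ : Q.PosSemidef) : 0 ≤ (P * Q).trace := by
  classical
  obtain ⟨X, rfl⟩ := CStarAlgebra.nonneg_iff_eq_star_mul_self.mp hP.nonneg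
  rw [mul_assoc, trace_mul_comm, star_eq_conjTranspose]
  exact (hQ.mul_mul_conjTranspose_same X).trace_nonneg

open scoped ComplexOrder in
theorem sum_trace_mul_nonneg_of_antitone_of_partialSums_posSemidef (n : ℕ)
    (A D : ℕ → Matrix m m 𝕜)
    (hA_anti : ∀ k, 1 ≤ k → k < n → (A k - A (k + 1)).PosSemidef) (hA_pos : (A n).PosSemidef)
    (hD : ∀ j, 1 ≤ j → j ≤ n → (∑ k ∈ Icc 1 j, D k).PosSemidef) :
    0 ≤ ∑ k ∈ Icc 1 n, (A k * D k).trace := by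
  classical
  obtain rfl | hn := n.eq_zero_or_pos
  · simp
  rw [← trace_sum, sum_Icc_mul_eq_sum_Ico_sub_mul_add, trace_add, trace_sum]
  refine add_nonneg (sum_nonneg fun j hj => ?_) (hA_pos.trace_mul_nonneg (hD n hn le_rfl))
  obtain ⟨hj1, hjn⟩ := mem_Ico.mp hj
  exact (hA_anti j hj1 hjn).trace_mul_nonneg (hD j hj1 hjn.le)

end Matrix

theorem abel_partial_summation_stmt17_general
    (N : ℕ) (n : ℕ)
    (A B : ℕ → Matrix (Fin N) (Fin N) ℝ)
    (hA_anti : ∀ k, 1 ≤ k → k < n → (A k - A (k + 1)).PosSemidef)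
    (hA_pos : (A n).PosSemidef)
    (hAB : ∀ j, 1 ≤ j → j ≤ n →
      (∑ k ∈ Finset.Icc 1 j, B k - ∑ k ∈ Finset.Icc 1 j, A k).PosSemidef) :
    ∑ k ∈ Finset.Icc 1 n, (A k * A k).trace ≤
      ∑ k ∈ Finset.Icc 1 n, (A k * B k).trace := by
  have h := Matrix.sum_trace_mul_nonneg_of_antitone_of_partialSums_posSemidef n A (B - A)
    hA_anti hA_pos fun j hj hjn => by
      simpa only [Pi.sub_apply, sum_sub_distrib] using hAB j hj hjn
  simpa only [Pi.sub_apply, Matrix.mul_sub, Matrix.trace_sub, sum_sub_distrib, sub_nonneg]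
    using h

/-- Trace inequality: if `A₁ ≥ ⋯ ≥ Aₙ ≥ 0` in the Loewner order on real symmetric
matrices and `∑_{k=1}^j A_k ≤ ∑_{k=1}^j B_k` for all `j`, then
`∑ Trace(A_k²) ≤ ∑ Trace(A_k B_k)`. -/
theorem abel_partial_summation_stmt17
    (N : ℕ) (n : ℕ) (hn : 1 ≤ n)
    (A B : ℕ → Matrix (Fin N) (Fin N) ℝ)
    (hA_symm : ∀ k, (A k).IsSymm) (hB_symm : ∀ k, (B k).IsSymm)
    (hA_anti : ∀ k, 1 ≤ k → k < n → (A k - A (k + 1)).PosSemidef)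
    (hA_pos : (A n).PosSemidef)
    (hAB : ∀ j, 1 ≤ j → j ≤ n →
      (∑ k ∈ Finset.Icc 1 j, B k - ∑ k ∈ Finset.Icc 1 j, A k).PosSemidef) :
    ∑ k ∈ Finset.Icc 1 n, (A k * A k).trace ≤
      ∑ k ∈ Finset.Icc 1 n, (A k * B k).trace :=
  abel_partial_summation_stmt17_general N n A B hA_anti hA_pos hAB
end
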